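/- arXiv:1608.00904 — 4 statements merged into one kernel-verified Lean document; each statement's English description precedes it below -/
import Mathlib

section
/- If K_{p,p} is the complete bipartite graph with bipartition (X,Y), X = {x_1,...,x_p}, Y = {y_1,...,y_p}, then K_{p,p} has a proper edge-coloring β with colors in {1,...,p + ⌊p/2⌋} such that for every i with 1 ≤ i ≤ p, the set of colors on edges incident to x_i equals the interval [⌊i/2⌋+1, ⌊i/2⌋+p], and likewise for y_i. -/
open scoped Classical

/-- A proper edge-coloring: distinct edges sharing a vertex receive distinct colors. -/
def IsProperEdgeColoring {V : Type*} (G : SimpleGraph V) (c : Sym2 V → ℕ) : Prop :=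
  ∀ e ∈ G.edgeSet, ∀ e' ∈ G.edgeSet, e ≠ e' → (∃ v, v ∈ e ∧ v ∈ e') → c e ≠ c e'

/-- A proper `t`-edge-coloring: proper, colors lie in `{1,…,t}`, and all colors are used. -/
def IsProperTEdgeColoring {V : Type*} (G : SimpleGraph V) (t : ℕ) (c : Sym2 V → ℕ) : Prop :=
  IsProperEdgeColoring G c ∧ (∀ e ∈ G.edgeSet, c e ∈ Finset.Icc 1 t) ∧
    ∀ k ∈ Finset.Icc 1 t, ∃ e ∈ G.edgeSet, c e = k

/-- The vSpectrum of a vertex: the set of colors appearing on edges incident to `v`. -/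
noncomputable def vSpectrum {V : Type*} [Fintype V] (G : SimpleGraph V) (c : Sym2 V → ℕ)
    (v : V) : Finset ℕ :=
  (Finset.univ.filter (fun u => G.Adj v u)).image (fun u => c s(v, u))

/-- The deficiency of a finite set of naturals: `max S − min S − |S| + 1`. -/
def setDef (S : Finset ℕ) : ℕ := (S.max.getD 0 - S.min.getD 0) - (S.card - 1)

/-- The deficiency of a proper edge-coloring: the sum of vertex deficiencies. -/
noncomputable def colDef {V : Type*} [Fintype V] (G : SimpleGraph V) (c : Sym2 V → ℕ) : ℕ :=
  ∑ v, setDef (vSpectrum G c v)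

/-- The deficiency of a graph: the minimum deficiency over all proper edge-colorings. -/
noncomputable def graphDef {V : Type*} [Fintype V] (G : SimpleGraph V) : ℕ :=
  sInf {d | ∃ c, IsProperEdgeColoring G c ∧ colDef G c = d}

/-- `w_def G`: the least `t` such that some proper `t`-edge-coloring attains `def(G)`. -/
noncomputable def wdef {V : Type*} [Fintype V] (G : SimpleGraph V) : ℕ :=
  sInf {t | ∃ c, IsProperTEdgeColoring G t c ∧ colDef G c = graphDef G}

/-- `W_def G`: the greatest `t` such that some proper `t`-edge-coloring attains `def(G)`. -/
noncomputable def Wdef {V : Type*} [Fintype V] (G : SimpleGraph V) : ℕ :=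
  sSup {t | ∃ c, IsProperTEdgeColoring G t c ∧ colDef G c = graphDef G}

/-- A graph is interval colorable if some proper edge-coloring has deficiency `0`. -/
def IntervalColorable {V : Type*} [Fintype V] (G : SimpleGraph V) : Prop :=
  ∃ c, IsProperEdgeColoring G c ∧ colDef G c = 0

/-- `w G`: the least `t` such that `G` has an interval `t`-coloring. -/
noncomputable def wint {V : Type*} [Fintype V] (G : SimpleGraph V) : ℕ :=
  sInf {t | ∃ c, IsProperTEdgeColoring G t c ∧ colDef G c = 0}

/-- `W G`: the greatest `t` such that `G` has an interval `t`-coloring. -/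
noncomputable def Wint {V : Type*} [Fintype V] (G : SimpleGraph V) : ℕ :=
  sSup {t | ∃ c, IsProperTEdgeColoring G t c ∧ colDef G c = 0}

/-!
Colour the edge `x_i y_j` (indices from `0`) by a residue `v = σ((i + j) mod p)`, where `σ` is a
permutation of `{0, …, p-1}`, lifted to `v + 1` or `v + 1 + p`. Since `j ↦ σ((i + j) mod p)` is a
bijection, lifting every colour at `x_i` into the window `[⌊(i+1)/2⌋ + 1, ⌊(i+1)/2⌋ + p]` of `p`
consecutive integers yields exactly that window. The lifts into the windows of `x_i` and `y_j` agree
as soon as `v < ⌊(i+1)/2⌋ ↔ v < ⌊(j+1)/2⌋`, and the interleaving permutation `σ(2k) = k`,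
`σ(2k+1) = ⌈p/2⌉ + k` guarantees this.
-/

namespace SimpleGraph

variable {α β : Type*}

def bipartiteColorFun (f : α → β → ℕ) : α ⊕ β → α ⊕ β → ℕ
  | .inl a, .inr b => f a b
  | .inr b, .inl a => f a b
  | _, _ => 0

def bipartiteEdgeColoring (f : α → β → ℕ) : Sym2 (α ⊕ β) → ℕ :=
  Sym2.lift ⟨bipartiteColorFun f, by rintro (a | b) (a' | b') <;> rfl⟩

@[simp]
lemma bipartiteEdgeColoring_mk (f : α → β → ℕ) (a : α) (b : β) :
    bipartiteEdgeColoring f s(.inl a, .inr b) = f a b :=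
  rfl

lemma exists_eq_mk_of_mem_edgeSet_completeBipartiteGraph {e : Sym2 (α ⊕ β)}
    (he : e ∈ (completeBipartiteGraph α β).edgeSet) : ∃ a b, e = s(.inl a, .inr b) := by
  induction e with
  | _ u v =>
    rcases u with a | b <;> rcases v with a' | b' <;> simp at he
    · exact ⟨a, b', rfl⟩
    · exact ⟨a', b, Sym2.eq_swap⟩

lemma vSpectrum_inl_completeBipartiteGraph [Fintype α] [Fintype β] (f : α → β → ℕ) (a : α) :
    vSpectrum (completeBipartiteGraph α β) (bipartiteEdgeColoring f) (.inl a) =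
      Finset.univ.image (f a) := by
  ext k
  simp [vSpectrum]

lemma vSpectrum_inr_completeBipartiteGraph [Fintype α] [Fintype β] (f : α → β → ℕ) (b : β) :
    vSpectrum (completeBipartiteGraph α β) (bipartiteEdgeColoring f) (.inr b) =
      Finset.univ.image (f · b) := by
  ext k
  simp [vSpectrum, Sym2.eq_swap (a := Sum.inr b)]

lemma isProperEdgeColoring_bipartiteEdgeColoring {f : α → β → ℕ}
    (hl : ∀ a, Function.Injective (f a)) (hr : ∀ b, Function.Injective (f · b)) :
    IsProperEdgeColoring (completeBipartiteGraph α β) (bipartiteEdgeColoring f) := by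
  rintro e he e' he' hne ⟨v, hv, hv'⟩
  obtain ⟨a, b, rfl⟩ := exists_eq_mk_of_mem_edgeSet_completeBipartiteGraph he
  obtain ⟨a', b', rfl⟩ := exists_eq_mk_of_mem_edgeSet_completeBipartiteGraph he'
  rw [Sym2.mem_iff] at hv hv'
  rw [bipartiteEdgeColoring_mk, bipartiteEdgeColoring_mk]
  rcases hv with rfl | rfl <;> rcases hv' with h | h <;> cases h
  · exact (hl a).ne fun h => hne (by rw [h])
  · exact (hr b).ne fun h => hne (by rw [h])

end SimpleGraph

def interleave (p m : ℕ) : ℕ := m / 2 + if m % 2 = 1 then (p + 1) / 2 else 0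

lemma interleave_lt {p m : ℕ} (hm : m < p) : interleave p m < p := by
  unfold interleave; split_ifs <;> omega

lemma interleave_injOn (p : ℕ) : Set.InjOn (interleave p) (Set.Iio p) := by
  intro m hm m' hm' h
  simp only [Set.mem_Iio, interleave] at hm hm' h
  split_ifs at h <;> omega

lemma interleave_add_mod_lt_half_succ {p i j : ℕ} (hi : i < p) (hj : j < p)
    (h : interleave p ((i + j) % p) < (i + 1) / 2) :
    interleave p ((i + j) % p) < (j + 1) / 2 := by
  have hmod := Nat.add_mod_add_ite i j p
  rw [Nat.mod_eq_of_lt hi, Nat.mod_eq_of_lt hj] at hmod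
  unfold interleave at *
  split_ifs at * <;> omega

def intervalColor (p i j : ℕ) : ℕ :=
  interleave p ((i + j) % p) + 1 +
    if interleave p ((i + j) % p) < (i + 1) / 2 ∧ interleave p ((i + j) % p) < (j + 1) / 2
    then p else 0

lemma intervalColor_comm (p i j : ℕ) : intervalColor p i j = intervalColor p j i := by
  simp only [intervalColor, Nat.add_comm j i, and_comm]

lemma intervalColor_eq {p i j : ℕ} (hi : i < p) (hj : j < p) :
    intervalColor p i j =
      interleave p ((i + j) % p) + 1 +
        if interleave p ((i + j) % p) < (i + 1) / 2 then p else 0 := by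
  simp only [intervalColor, and_iff_left_of_imp (interleave_add_mod_lt_half_succ hi hj)]

lemma intervalColor_mem_Icc {p i j : ℕ} (hi : i < p) (hj : j < p) :
    intervalColor p i j ∈ Finset.Icc ((i + 1) / 2 + 1) ((i + 1) / 2 + p) := by
  have := interleave_lt (Nat.mod_lt (i + j) (Nat.zero_lt_of_lt hi))
  rw [intervalColor_eq hi hj, Finset.mem_Icc]
  split_ifs <;> omega

lemma intervalColor_injective {p : ℕ} (i : Fin p) :
    Function.Injective fun j : Fin p => intervalColor p i j := by
  have : NeZero p := ⟨i.pos.ne'⟩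
  intro j j' h
  have hv := interleave_lt (i + j).isLt
  have hv' := interleave_lt (i + j').isLt
  simp only [intervalColor_eq i.isLt j.isLt, intervalColor_eq i.isLt j'.isLt, ← Fin.val_add] at h
  have hsum : i + j = i + j' :=
    Fin.ext <| interleave_injOn p (i + j).isLt (i + j').isLt (by split_ifs at h <;> omega)
  exact add_left_cancel hsum

lemma image_intervalColor {p : ℕ} (i : Fin p) :
    Finset.univ.image (fun j : Fin p => intervalColor p i j) =
      Finset.Icc ((i.val + 1) / 2 + 1) ((i.val + 1) / 2 + p) := by
  refine Finset.eq_of_subset_of_card_le ?_ ?_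
  · simp only [Finset.subset_iff, Finset.mem_image, Finset.mem_univ, true_and]
    rintro _ ⟨j, rfl⟩
    exact intervalColor_mem_Icc i.isLt j.isLt
  · rw [Finset.card_image_of_injective _ (intervalColor_injective i), Nat.card_Icc]
    simp

/-- a special interval coloring of `K_{p,p}`. -/
theorem stmt_0 (p : ℕ) :
    ∃ c : Sym2 (Fin p ⊕ Fin p) → ℕ,
      IsProperEdgeColoring (completeBipartiteGraph (Fin p) (Fin p)) c ∧
      (∀ e ∈ (completeBipartiteGraph (Fin p) (Fin p)).edgeSet,
        c e ∈ Finset.Icc 1 (p + p / 2)) ∧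
      (∀ i : Fin p,
        vSpectrum (completeBipartiteGraph (Fin p) (Fin p)) c (Sum.inl i) =
          Finset.Icc ((i.val + 1) / 2 + 1) ((i.val + 1) / 2 + p) ∧
        vSpectrum (completeBipartiteGraph (Fin p) (Fin p)) c (Sum.inr i) =
          Finset.Icc ((i.val + 1) / 2 + 1) ((i.val + 1) / 2 + p)) := by
  refine ⟨SimpleGraph.bipartiteEdgeColoring fun i j : Fin p => intervalColor p i j,
    SimpleGraph.isProperEdgeColoring_bipartiteEdgeColoring intervalColor_injective ?_, ?_, ?_⟩
  · intro j
    simpa only [intervalColor_comm _ _ (j : ℕ)] using intervalColor_injective j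
  · intro e he
    obtain ⟨i, j, rfl⟩ := SimpleGraph.exists_eq_mk_of_mem_edgeSet_completeBipartiteGraph he
    have := intervalColor_mem_Icc i.isLt j.isLt
    simp only [SimpleGraph.bipartiteEdgeColoring_mk, Finset.mem_Icc] at this ⊢
    omega
  · intro i
    rw [SimpleGraph.vSpectrum_inl_completeBipartiteGraph,
      SimpleGraph.vSpectrum_inr_completeBipartiteGraph]
    simp only [intervalColor_comm _ _ (i : ℕ), image_intervalColor, and_self]
end

section
/- Let 𝔠 be a class of graphs closed under attaching pendant edges, and suppose every interval-colorable graph G' in 𝔠 satisfies W(G') ≤ f(|V(G')|) for a fixed function f. Then every graph G in 𝔠 satisfies W_def(G) ≤ f(|V(G)| + def(G)). -/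
open scoped Classical

/-- Attaching `k` pendant edges to `G`, the `i`-th pendant attached at `g i`. -/
def attachPendants {V : Type} (G : SimpleGraph V) (k : ℕ) (g : Fin k → V) :
    SimpleGraph (V ⊕ Fin k) :=
  SimpleGraph.fromRel (fun a b =>
    (∃ x y, a = Sum.inl x ∧ b = Sum.inl y ∧ G.Adj x y) ∨
    (∃ i, a = Sum.inl (g i) ∧ b = Sum.inr i))

/-!
Fill every gap of every spectrum by a pendant edge: for each vertex `v` and each color `m` that
lies between the least and the greatest color at `v` but is missing there, attach a pendant edge
at `v` colored `m`. A proper `t`-edge-coloring of deficiency `d` thereby becomes an interval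
`t`-coloring of a graph of the class with `|V| + d` vertices.
-/

open Finset Function

def intervalHull (S : Finset ℕ) : Finset ℕ :=
  if h : S.Nonempty then Icc (S.min' h) (S.max' h) else ∅

lemma setDef_of_nonempty {S : Finset ℕ} (h : S.Nonempty) :
    setDef S = S.max' h - S.min' h - (#S - 1) := by
  rw [setDef, ← coe_max' h, ← coe_min' h]
  rfl

lemma setDef_Icc {a b : ℕ} (h : a ≤ b) : setDef (Icc a b) = 0 := by
  have hne := nonempty_Icc.2 h
  have hmin : (Icc a b).min' hne = a :=
    le_antisymm (min'_le _ _ (left_mem_Icc.2 h)) (le_min' _ _ _ fun x hx => (mem_Icc.1 hx).1)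
  have hmax : (Icc a b).max' hne = b :=
    le_antisymm (max'_le _ _ _ fun x hx => (mem_Icc.1 hx).2) (le_max' _ _ (right_mem_Icc.2 h))
  rw [setDef_of_nonempty hne, hmin, hmax, Nat.card_Icc]
  omega

lemma setDef_singleton (m : ℕ) : setDef {m} = 0 := by
  rw [← Icc_self]
  exact setDef_Icc le_rfl

lemma subset_intervalHull (S : Finset ℕ) : S ⊆ intervalHull S := fun x hx => by
  rw [intervalHull, dif_pos ⟨x, hx⟩]
  exact mem_Icc.2 ⟨min'_le _ _ hx, le_max' _ _ hx⟩

lemma setDef_intervalHull (S : Finset ℕ) : setDef (intervalHull S) = 0 := by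
  unfold intervalHull
  split_ifs with h
  · exact setDef_Icc (min'_le _ _ (max'_mem _ h))
  · rfl

lemma intervalHull_subset_Icc {S : Finset ℕ} {a b : ℕ} (h : S ⊆ Icc a b) :
    intervalHull S ⊆ Icc a b := by
  unfold intervalHull
  split_ifs with hS
  · exact Icc_subset_Icc (mem_Icc.1 (h (min'_mem _ hS))).1 (mem_Icc.1 (h (max'_mem _ hS))).2
  · exact empty_subset _

lemma card_intervalHull_sdiff (S : Finset ℕ) : #(intervalHull S \ S) = setDef S := by
  have hcard := card_le_card (subset_intervalHull S)
  rw [card_sdiff_of_subset (subset_intervalHull S)]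
  unfold intervalHull at hcard ⊢
  split_ifs at hcard ⊢ with h
  · rw [Nat.card_Icc] at hcard ⊢
    rw [setDef_of_nonempty h]
    have := card_pos.2 h
    omega
  · rw [not_nonempty_iff_eq_empty.1 h]
    rfl

lemma mem_vSpectrum_iff {V : Type*} [Fintype V] {G : SimpleGraph V} {c : Sym2 V → ℕ}
    {v : V} {m : ℕ} : m ∈ vSpectrum G c v ↔ ∃ u, G.Adj v u ∧ c s(v, u) = m := by
  simp [vSpectrum]

lemma isProperEdgeColoring_iff {V : Type*} (G : SimpleGraph V) (c : Sym2 V → ℕ) :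
    IsProperEdgeColoring G c ↔
      ∀ v u w, G.Adj v u → G.Adj v w → c s(v, u) = c s(v, w) → u = w := by
  constructor
  · intro hc v u w hu hw huw
    by_contra hne
    exact hc _ hu _ hw (Sym2.congr_right.not.2 hne) ⟨v, Sym2.mem_mk_left _ _,
      Sym2.mem_mk_left _ _⟩ huw
  · rintro h e he e' he' hne ⟨v, hv, hv'⟩ hee'
    obtain ⟨u, rfl⟩ := Sym2.mem_iff_exists.1 hv
    obtain ⟨w, rfl⟩ := Sym2.mem_iff_exists.1 hv'
    exact hne (by rw [h v u w he he' hee'])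

lemma IsProperTEdgeColoring.vSpectrum_subset {V : Type*} [Fintype V] {G : SimpleGraph V}
    {t : ℕ} {c : Sym2 V → ℕ} (hc : IsProperTEdgeColoring G t c) (v : V) :
    vSpectrum G c v ⊆ Icc 1 t := fun _ hm => by
  obtain ⟨u, hu, rfl⟩ := mem_vSpectrum_iff.1 hm
  exact hc.2.1 _ hu

lemma IsProperTEdgeColoring.le_card_sym2 {V : Type*} [Fintype V] {G : SimpleGraph V}
    {t : ℕ} {c : Sym2 V → ℕ} (hc : IsProperTEdgeColoring G t c) :
    t ≤ Fintype.card (Sym2 V) :=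
  calc t = #(Icc 1 t) := by simp
    _ ≤ #(univ.image c) := card_le_card fun m hm => by
        obtain ⟨e, -, rfl⟩ := hc.2.2 m hm
        exact mem_image_of_mem _ (mem_univ e)
    _ ≤ Fintype.card (Sym2 V) := card_image_le

lemma le_Wint {V : Type*} [Fintype V] {G : SimpleGraph V} {t : ℕ} {c : Sym2 V → ℕ}
    (hc : IsProperTEdgeColoring G t c) (h0 : colDef G c = 0) : t ≤ Wint G :=
  le_csSup ⟨Fintype.card (Sym2 V), fun _ ⟨_, h, _⟩ => h.le_card_sym2⟩ ⟨c, hc, h0⟩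

section Pendants

variable {V : Type} {k : ℕ}

def pendantColor (c : Sym2 V → ℕ) (col : Fin k → ℕ) : Sym2 (V ⊕ Fin k) → ℕ :=
  Sym2.lift ⟨fun a b => match a, b with
    | .inl x, .inl y => c s(x, y)
    | .inl _, .inr i => col i
    | .inr i, .inl _ => col i
    | .inr _, .inr _ => 0,
    by rintro (x | i) (y | j) <;> simp [Sym2.eq_swap]⟩

@[simp] lemma pendantColor_inl_inl (c : Sym2 V → ℕ) (col : Fin k → ℕ) (x y : V) :
    pendantColor c col s(.inl x, .inl y) = c s(x, y) := rfl

@[simp] lemma pendantColor_inl_inr (c : Sym2 V → ℕ) (col : Fin k → ℕ) (x : V) (i : Fin k) :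
    pendantColor c col s(.inl x, .inr i) = col i := rfl

@[simp] lemma pendantColor_inr_inl (c : Sym2 V → ℕ) (col : Fin k → ℕ) (x : V) (i : Fin k) :
    pendantColor c col s(.inr i, .inl x) = col i := rfl

variable (G : SimpleGraph V) (g : Fin k → V)

@[simp] lemma attachPendants_adj_inl_inl (x y : V) :
    (attachPendants G k g).Adj (.inl x) (.inl y) ↔ G.Adj x y := by
  simpa [attachPendants, G.adj_comm y x] using G.ne_of_adj

@[simp] lemma attachPendants_adj_inl_inr (x : V) (i : Fin k) :
    (attachPendants G k g).Adj (.inl x) (.inr i) ↔ g i = x := by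
  simp [attachPendants, eq_comm]

@[simp] lemma attachPendants_adj_inr_inl (x : V) (i : Fin k) :
    (attachPendants G k g).Adj (.inr i) (.inl x) ↔ g i = x := by
  simp [attachPendants, eq_comm]

@[simp] lemma attachPendants_adj_inr_inr (i j : Fin k) :
    ¬ (attachPendants G k g).Adj (.inr i) (.inr j) := by
  simp [attachPendants]

variable [Fintype V] (c : Sym2 V → ℕ) (col : Fin k → ℕ)

lemma vSpectrum_attachPendants_inl (v : V) :
    vSpectrum (attachPendants G k g) (pendantColor c col) (.inl v) =
      vSpectrum G c v ∪ (univ.filter (g · = v)).image col := by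
  ext m
  simp [mem_vSpectrum_iff]

lemma vSpectrum_attachPendants_inr (i : Fin k) :
    vSpectrum (attachPendants G k g) (pendantColor c col) (.inr i) = {col i} := by
  ext m
  simp [mem_vSpectrum_iff, eq_comm]

variable {G g c col}

lemma IsProperEdgeColoring.attachPendants (hc : IsProperEdgeColoring G c)
    (hfree : ∀ i, col i ∉ vSpectrum G c (g i)) (hinj : Injective fun i => (g i, col i)) :
    IsProperEdgeColoring (attachPendants G k g) (pendantColor c col) := by
  rw [isProperEdgeColoring_iff] at hc ⊢
  rintro (v | i) (u | j) (w | l) hu hw h <;> simp at hu hw h ⊢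
  · exact hc v u w hu hw h
  · subst hw
    exact hfree l (mem_vSpectrum_iff.2 ⟨u, hu, h⟩)
  · subst hu
    exact hfree j (mem_vSpectrum_iff.2 ⟨w, hw, h.symm⟩)
  · exact hinj (Prod.ext (hu.trans hw.symm) h)
  · exact hu.symm.trans hw

lemma IsProperTEdgeColoring.attachPendants {t : ℕ} (hc : IsProperTEdgeColoring G t c)
    (hcol : ∀ i, col i ∈ Icc 1 t) (hfree : ∀ i, col i ∉ vSpectrum G c (g i))
    (hinj : Injective fun i => (g i, col i)) :
    IsProperTEdgeColoring (attachPendants G k g) t (pendantColor c col) := by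
  refine ⟨hc.1.attachPendants hfree hinj, fun e he => ?_, fun m hm => ?_⟩
  · induction e using Sym2.ind with
    | _ a b =>
      rcases a with x | i <;> rcases b with y | j <;> simp at he
      exacts [hc.2.1 _ he, hcol j, hcol i]
  · obtain ⟨e, he, rfl⟩ := hc.2.2 m hm
    induction e using Sym2.ind with
    | _ x y => exact ⟨s(.inl x, .inl y), by simpa using he, rfl⟩

end Pendants

theorem exists_attachPendants_colDef_eq_zero {V : Type} [Fintype V]
    {G : SimpleGraph V} {t : ℕ} {c : Sym2 V → ℕ} (hc : IsProperTEdgeColoring G t c) {d : ℕ}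
    (hd : colDef G c = d) :
    ∃ (g : Fin d → V) (c' : Sym2 (V ⊕ Fin d) → ℕ),
      IsProperTEdgeColoring (attachPendants G d g) t c' ∧
        colDef (attachPendants G d g) c' = 0 := by
  set S := vSpectrum G c
  let T : Finset (Σ _ : V, ℕ) := univ.sigma fun v => intervalHull (S v) \ S v
  have hT : #T = d := by
    rw [← hd, card_sigma]
    exact sum_congr rfl fun v _ => card_intervalHull_sdiff (S v)
  let e := T.equivFinOfCardEq hT
  let g : Fin d → V := fun i => (e.symm i).1.1
  let col : Fin d → ℕ := fun i => (e.symm i).1.2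
  have hgap : ∀ i, col i ∈ intervalHull (S (g i)) \ S (g i) :=
    fun i => (mem_sigma.1 (e.symm i).2).2
  have hinj : Injective fun i => (g i, col i) := fun i j h => by
    obtain ⟨hg, hcol⟩ := Prod.ext_iff.1 h
    exact e.symm.injective (Subtype.ext (Sigma.ext hg (heq_of_eq hcol)))
  have hgaps : ∀ v, (univ.filter (g · = v)).image col = intervalHull (S v) \ S v := by
    intro v
    ext m
    simp only [mem_image, mem_filter, mem_univ, true_and]
    constructor
    · rintro ⟨i, rfl, rfl⟩
      exact hgap i
    · intro hm
      refine ⟨e ⟨⟨v, m⟩, mem_sigma.2 ⟨mem_univ v, hm⟩⟩, ?_, ?_⟩ <;> simp [g, col]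
  have hc' : IsProperTEdgeColoring (attachPendants G d g) t (pendantColor c col) :=
    hc.attachPendants
      (fun i => intervalHull_subset_Icc (hc.vSpectrum_subset _) (mem_sdiff.1 (hgap i)).1)
      (fun i => (mem_sdiff.1 (hgap i)).2) hinj
  have hspec : ∀ v, vSpectrum (attachPendants G d g) (pendantColor c col) (.inl v) =
      intervalHull (S v) := fun v => by
    rw [vSpectrum_attachPendants_inl, hgaps, union_sdiff_of_subset (subset_intervalHull _)]
  refine ⟨g, pendantColor c col, hc', ?_⟩
  simp only [colDef, Fintype.sum_sum_type, hspec, setDef_intervalHull,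
    vSpectrum_attachPendants_inr, setDef_singleton, sum_const_zero, add_zero]

theorem stmt_1_general
    (C : ∀ (W : Type) [Fintype W], SimpleGraph W → Prop)
    (hclosed : ∀ (W : Type) [Fintype W] (G : SimpleGraph W) (k : ℕ) (g : Fin k → W),
      C W G → C (W ⊕ Fin k) (attachPendants G k g))
    (f : ℕ → ℕ)
    (hbound : ∀ (W : Type) [Fintype W] (Gp : SimpleGraph W),
      C W Gp → IntervalColorable Gp → Wint Gp ≤ f (Fintype.card W))
    (V : Type) [Fintype V] (G : SimpleGraph V) (hG : C V G) :
    Wdef G ≤ f (Fintype.card V + graphDef G) := by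
  rcases Set.eq_empty_or_nonempty
    {t | ∃ c, IsProperTEdgeColoring G t c ∧ colDef G c = graphDef G} with hempty | hne
  · simp [Wdef, hempty]
  refine csSup_le hne ?_
  rintro t ⟨c, hc, hdef⟩
  obtain ⟨g, c', hc', h0⟩ := exists_attachPendants_colDef_eq_zero hc hdef
  calc t ≤ Wint (attachPendants G _ g) := le_Wint hc' h0
    _ ≤ f (Fintype.card (V ⊕ Fin (graphDef G))) :=
      hbound _ _ (hclosed V G _ g hG) ⟨c', hc'.1, h0⟩
    _ = f (Fintype.card V + graphDef G) := by rw [Fintype.card_sum, Fintype.card_fin]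

theorem stmt_1
    (C : ∀ (W : Type) [Fintype W], SimpleGraph W → Prop)
    (hiso : ∀ (W₁ W₂ : Type) [Fintype W₁] [Fintype W₂]
      (G₁ : SimpleGraph W₁) (G₂ : SimpleGraph W₂), G₁ ≃g G₂ → C W₁ G₁ → C W₂ G₂)
    (hclosed : ∀ (W : Type) [Fintype W] (G : SimpleGraph W) (k : ℕ) (g : Fin k → W),
      C W G → C (W ⊕ Fin k) (attachPendants G k g))
    (f : ℕ → ℕ)
    (hbound : ∀ (W : Type) [Fintype W] (Gp : SimpleGraph W),
      C W Gp → IntervalColorable Gp → Wint Gp ≤ f (Fintype.card W))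
    (V : Type) [Fintype V] (G : SimpleGraph V) (hG : C V G) :
    Wdef G ≤ f (Fintype.card V + graphDef G) :=
  stmt_1_general C hclosed f hbound V G hG
end

section
/- The graph K'_{n,n} obtained from K_{n,n} by subdividing one edge satisfies def(K'_{n,n}) = 1 for every n ≥ 2. -/
/-!
Upper bound: color `u_i v_j` by `(i + j - 1) mod n + 1`, a Latin square and hence an interval
coloring of `K_{n,n}`. It gives `u_n v_n` the color `n`; after subdividing, `u_n w` keeps `n` and
`w v_n` gets `n + 1`, so only `v_n`, with spectrum `{1, …, n - 1, n + 1}`, has a gap.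

Lower bound: in an interval coloring every spectrum is a gap-free set of at most `Δ = n` colors,
so reducing the colors mod `n` keeps the coloring proper. Each of the `n` color classes is then a
matching on `2n + 1` vertices, with at most `n` edges, whereas `K'_{n,n}` has `n² + 1` edges.
-/

open scoped Classical

/-- `K'_{n,n}`: the complete bipartite graph `K_{n,n}` with the edge `u_n v_n`
subdivided by a new vertex `w`.  Here `Sum.inl i` is `u_{i+1}`,
`Sum.inr (Sum.inl j)` is `v_{j+1}` and `Sum.inr (Sum.inr ())` is `w`. -/
def Kprime (n : ℕ) : SimpleGraph (Fin n ⊕ Fin n ⊕ Unit) :=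
  SimpleGraph.fromRel (fun a b =>
    (∃ i j : Fin n, a = Sum.inl i ∧ b = Sum.inr (Sum.inl j) ∧
      ¬(i.val = n - 1 ∧ j.val = n - 1)) ∨
    (∃ i : Fin n, i.val = n - 1 ∧ a = Sum.inl i ∧ b = Sum.inr (Sum.inr ())) ∨
    (∃ j : Fin n, j.val = n - 1 ∧ a = Sum.inr (Sum.inr ()) ∧ b = Sum.inr (Sum.inl j)))

open Finset

lemma setDef_eq_of_nonempty {S : Finset ℕ} (hS : S.Nonempty) :
    setDef S = S.max' hS - S.min' hS - (#S - 1) := by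
  rw [setDef, ← coe_max' hS, ← coe_min' hS]
  rfl

lemma setDef_le_of_subset_Icc {S : Finset ℕ} {a b : ℕ} (hab : S ⊆ Icc a b) :
    setDef S ≤ b - a - (#S - 1) := by
  rcases S.eq_empty_or_nonempty with rfl | hS
  · exact (show setDef ∅ = 0 from rfl).le.trans (Nat.zero_le _)
  have hmax := (mem_Icc.1 (hab (S.max'_mem hS))).2
  have hmin := (mem_Icc.1 (hab (S.min'_mem hS))).1
  rw [setDef_eq_of_nonempty hS]
  omega

lemma injOn_mod_of_setDef_eq_zero {S : Finset ℕ} {n : ℕ} (h0 : setDef S = 0)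
    (hcard : #S ≤ n) :
    Set.InjOn (· % n) S := by
  intro x hx y hy hxy
  have hS : S.Nonempty := ⟨x, hx⟩
  rw [setDef_eq_of_nonempty hS] at h0
  have := S.le_max' x hx
  have := S.min'_le x hx
  have := S.le_max' y hy
  have := S.min'_le y hy
  have := hS.card_pos
  refine Nat.ModEq.eq_of_abs_lt hxy (abs_sub_lt_iff.2 ⟨?_, ?_⟩) <;> omega

section Deficiency

variable {V : Type*} [Fintype V] {G : SimpleGraph V} {c : Sym2 V → ℕ}

lemma mem_vSpectrum {v u : V} (h : G.Adj v u) : c s(v, u) ∈ vSpectrum G c v :=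
  mem_image.2 ⟨u, by simpa using h, rfl⟩

lemma vSpectrum_eq_image (v : V) :
    vSpectrum G c v = (G.neighborFinset v).image (fun u => c s(v, u)) := by
  rw [vSpectrum, G.neighborFinset_eq_filter]

lemma card_vSpectrum_le_degree (v : V) : #(vSpectrum G c v) ≤ G.degree v := by
  rw [vSpectrum_eq_image, ← G.card_neighborFinset_eq_degree]
  exact card_image_le

lemma isProperEdgeColoring_of_card_vSpectrum (h : ∀ v, #(vSpectrum G c v) = G.degree v) :
    IsProperEdgeColoring G c := by
  rintro e he e' he' hne ⟨v, hv, hv'⟩ hcol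
  obtain ⟨b, rfl⟩ := Sym2.mem_iff_exists.1 hv
  obtain ⟨b', rfl⟩ := Sym2.mem_iff_exists.1 hv'
  have hinj : Set.InjOn (fun u => c s(v, u)) (G.neighborFinset v) :=
    card_image_iff.1 (by rw [← vSpectrum_eq_image, h]; rfl)
  exact hne (congrArg _ (hinj (by simpa using he) (by simpa using he') hcol))

lemma two_mul_card_colorClass_le (hc : IsProperEdgeColoring G c) (k : ℕ) :
    2 * #{e ∈ G.edgeFinset | c e = k} ≤ Fintype.card V := by
  set M := {e ∈ G.edgeFinset | c e = k}
  have hM : ∀ e ∈ M, e ∈ G.edgeSet ∧ c e = k := fun e he => by simpa [M] using he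
  have hdisj : (M : Set (Sym2 V)).PairwiseDisjoint Sym2.toFinset := by
    intro e he e' he' hne
    refine disjoint_left.2 fun v hv hv' => ?_
    exact hc e (hM e he).1 e' (hM e' he').1 hne
      ⟨v, Sym2.mem_toFinset.1 hv, Sym2.mem_toFinset.1 hv'⟩
      ((hM e he).2.trans (hM e' he').2.symm)
  calc 2 * #M = ∑ e ∈ M, #e.toFinset := by
        rw [mul_comm, ← smul_eq_mul, ← sum_const]
        refine sum_congr rfl fun e he => ?_
        exact (Sym2.card_toFinset_of_not_isDiag e (G.not_isDiag_of_mem_edgeSet (hM e he).1)).symm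
    _ = #(M.biUnion Sym2.toFinset) := (card_biUnion hdisj).symm
    _ ≤ Fintype.card V := card_le_univ _

lemma isProperEdgeColoring_mod {n : ℕ} (hdeg : ∀ v, G.degree v ≤ n)
    (hc : IsProperEdgeColoring G c) (h0 : colDef G c = 0) :
    IsProperEdgeColoring G (fun e => c e % n) := by
  rintro e he e' he' hne ⟨v, hv, hv'⟩ hmod
  obtain ⟨b, rfl⟩ := Sym2.mem_iff_exists.1 hv
  obtain ⟨b', rfl⟩ := Sym2.mem_iff_exists.1 hv'
  have hgap : setDef (vSpectrum G c v) = 0 := sum_eq_zero_iff.1 h0 v (mem_univ v)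
  refine hc _ he _ he' hne ⟨v, Sym2.mem_mk_left _ _, Sym2.mem_mk_left _ _⟩ ?_
  exact injOn_mod_of_setDef_eq_zero hgap ((card_vSpectrum_le_degree v).trans (hdeg v))
    (mem_vSpectrum he) (mem_vSpectrum he') hmod

lemma card_edgeFinset_le_of_colDef_eq_zero {n : ℕ} (hn : 0 < n) (hdeg : ∀ v, G.degree v ≤ n)
    (hc : IsProperEdgeColoring G c) (h0 : colDef G c = 0) :
    #G.edgeFinset ≤ n * (Fintype.card V / 2) := by
  have hres := isProperEdgeColoring_mod hdeg hc h0
  calc #G.edgeFinset = ∑ k ∈ range n, #{e ∈ G.edgeFinset | c e % n = k} :=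
        card_eq_sum_card_fiberwise fun e _ => mem_range.2 (Nat.mod_lt _ hn)
    _ ≤ ∑ _k ∈ range n, Fintype.card V / 2 := sum_le_sum fun k _ => by
        have := two_mul_card_colorClass_le hres k
        omega
    _ = n * (Fintype.card V / 2) := by simp

end Deficiency

section Kprime

variable {n : ℕ}

@[simp] lemma Kprime_adj_inl_inl (i i' : Fin n) : ¬(Kprime n).Adj (.inl i) (.inl i') := by
  simp [Kprime]

@[simp] lemma Kprime_adj_inl_inr (i j : Fin n) :
    (Kprime n).Adj (.inl i) (.inr (.inl j)) ↔ ¬(i.val = n - 1 ∧ j.val = n - 1) := by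
  simp [Kprime]

@[simp] lemma Kprime_adj_inl_w (i : Fin n) :
    (Kprime n).Adj (.inl i) (.inr (.inr ())) ↔ i.val = n - 1 := by
  simp [Kprime]

@[simp] lemma Kprime_adj_inr_inr (j j' : Fin n) :
    ¬(Kprime n).Adj (.inr (.inl j)) (.inr (.inl j')) := by
  simp [Kprime]

@[simp] lemma Kprime_adj_inr_w (j : Fin n) :
    (Kprime n).Adj (.inr (.inl j)) (.inr (.inr ())) ↔ j.val = n - 1 := by
  simp [Kprime]

/-- The neighbours of `u_i` and of `v_j` are indexed by `Fin n` as in `K_{n,n}`, except that the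
subdivided edge `u_n v_n` now leads to `w`. -/
def uNbr (i j : Fin n) : Fin n ⊕ Fin n ⊕ Unit :=
  if i.val = n - 1 ∧ j.val = n - 1 then .inr (.inr ()) else .inr (.inl j)

def vNbr (j i : Fin n) : Fin n ⊕ Fin n ⊕ Unit :=
  if i.val = n - 1 ∧ j.val = n - 1 then .inr (.inr ()) else .inl i

lemma uNbr_injective (i : Fin n) : Function.Injective (uNbr i) := by
  intro j j' h
  unfold uNbr at h
  split_ifs at h <;> simp_all [Fin.ext_iff]

lemma vNbr_injective (j : Fin n) : Function.Injective (vNbr j) := by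
  intro i i' h
  unfold vNbr at h
  split_ifs at h <;> simp_all [Fin.ext_iff]

lemma Kprime_neighborFinset_inl (i : Fin n) :
    (Kprime n).neighborFinset (.inl i) = univ.image (uNbr i) := by
  ext x
  rcases x with i' | j | ⟨⟨⟩⟩ <;> simp [uNbr, ite_eq_iff]
  exact fun h => ⟨i, h⟩

lemma Kprime_neighborFinset_inr (j : Fin n) :
    (Kprime n).neighborFinset (.inr (.inl j)) = univ.image (vNbr j) := by
  ext x
  rcases x with i | j' | ⟨⟨⟩⟩ <;>
    simp [vNbr, ite_eq_iff, SimpleGraph.adj_comm _ _ (Sum.inl _)]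
  exact fun h => ⟨j, h⟩

lemma Kprime_neighborFinset_w (hn : 0 < n) :
    (Kprime n).neighborFinset (.inr (.inr ())) =
      {.inl ⟨n - 1, by omega⟩, .inr (.inl ⟨n - 1, by omega⟩)} := by
  ext x
  rcases x with i | j | ⟨⟨⟩⟩ <;>
    simp [SimpleGraph.adj_comm _ (Sum.inr (Sum.inr ())), Fin.ext_iff]

lemma Kprime_degree_inl (i : Fin n) : (Kprime n).degree (.inl i) = n := by
  rw [← SimpleGraph.card_neighborFinset_eq_degree, Kprime_neighborFinset_inl,
    card_image_of_injective _ (uNbr_injective i), card_univ, Fintype.card_fin]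

lemma Kprime_degree_inr (j : Fin n) : (Kprime n).degree (.inr (.inl j)) = n := by
  rw [← SimpleGraph.card_neighborFinset_eq_degree, Kprime_neighborFinset_inr,
    card_image_of_injective _ (vNbr_injective j), card_univ, Fintype.card_fin]

lemma Kprime_degree_w (hn : 0 < n) : (Kprime n).degree (.inr (.inr ())) = 2 := by
  rw [← SimpleGraph.card_neighborFinset_eq_degree, Kprime_neighborFinset_w hn]
  simp

lemma Kprime_card_edgeFinset (hn : 0 < n) : #(Kprime n).edgeFinset = n * n + 1 := by
  have h := (Kprime n).sum_degrees_eq_twice_card_edges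
  simp only [Fintype.sum_sum_type, Kprime_degree_inl, Kprime_degree_inr, Kprime_degree_w hn,
    sum_const, card_univ, Fintype.card_fin, Fintype.card_unit, smul_eq_mul] at h
  linarith

lemma Kprime_degree_le (hn : 2 ≤ n) : ∀ v, (Kprime n).degree v ≤ n := by
  rintro (i | j | ⟨⟨⟩⟩)
  · exact (Kprime_degree_inl i).le
  · exact (Kprime_degree_inr j).le
  · rw [Kprime_degree_w (by omega)]
    exact hn

lemma Kprime_colDef_ne_zero (hn : 2 ≤ n) {c : Sym2 (Fin n ⊕ Fin n ⊕ Unit) → ℕ}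
    (hc : IsProperEdgeColoring (Kprime n) c) : colDef (Kprime n) c ≠ 0 := by
  intro h0
  have h := card_edgeFinset_le_of_colDef_eq_zero (by omega) (Kprime_degree_le hn) hc h0
  rw [Kprime_card_edgeFinset (by omega)] at h
  simp only [Fintype.card_sum, Fintype.card_fin, Fintype.card_unit] at h
  rw [show (n + (n + 1)) / 2 = n by omega] at h
  omega

end Kprime

section KprimeColoring

variable {n : ℕ}

/-- The Latin square `(i + j + 1) mod n + 1` on `K_{n,n}`, in the indices of `Fin n`; of the two
halves of the subdivided edge, `u_n w` keeps the color `n` that `u_n v_n` would get, and `w v_n`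
gets `n + 1`. -/
def kprimeColor (n : ℕ) : Fin n ⊕ Fin n ⊕ Unit → Fin n ⊕ Fin n ⊕ Unit → ℕ
  | .inl i, .inr (.inl j) | .inr (.inl j), .inl i => (i + j + 1) % n + 1
  | .inl _, .inr (.inr _) | .inr (.inr _), .inl _ => n
  | .inr (.inl _), .inr (.inr _) | .inr (.inr _), .inr (.inl _) => n + 1
  | _, _ => 0

def kprimeColoring (n : ℕ) : Sym2 (Fin n ⊕ Fin n ⊕ Unit) → ℕ :=
  Sym2.lift ⟨kprimeColor n, by rintro (_ | _ | _) (_ | _ | _) <;> rfl⟩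

lemma last_add_last_mod (hn : 0 < n) : (n - 1 + (n - 1) + 1) % n + 1 = n := by
  rw [show n - 1 + (n - 1) + 1 = n - 1 + n by omega, Nat.add_mod_right,
    Nat.mod_eq_of_lt (by omega)]
  omega

lemma vSpectrum_kprimeColoring_inl (hn : 0 < n) (i : Fin n) :
    vSpectrum (Kprime n) (kprimeColoring n) (.inl i) =
      univ.image (fun j : Fin n => (i + j + 1) % n + 1) := by
  rw [vSpectrum_eq_image, Kprime_neighborFinset_inl, image_image]
  refine image_congr fun j _ => ?_
  dsimp only [Function.comp_apply, uNbr]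
  split_ifs with h
  · simp [kprimeColoring, kprimeColor, h.1, h.2, last_add_last_mod hn]
  · rfl

lemma vSpectrum_kprimeColoring_inr (j : Fin n) :
    vSpectrum (Kprime n) (kprimeColoring n) (.inr (.inl j)) =
      univ.image (fun i : Fin n =>
        if i.val = n - 1 ∧ j.val = n - 1 then n + 1 else (i + j + 1) % n + 1) := by
  rw [vSpectrum_eq_image, Kprime_neighborFinset_inr, image_image]
  refine image_congr fun i _ => ?_
  dsimp only [Function.comp_apply, vNbr]
  split_ifs <;> rfl

lemma vSpectrum_kprimeColoring_w (hn : 0 < n) :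
    vSpectrum (Kprime n) (kprimeColoring n) (.inr (.inr ())) = {n, n + 1} := by
  rw [vSpectrum_eq_image, Kprime_neighborFinset_w hn, image_insert, image_singleton]
  rfl

lemma card_vSpectrum_kprimeColoring (hn : 0 < n) (v : Fin n ⊕ Fin n ⊕ Unit) :
    #(vSpectrum (Kprime n) (kprimeColoring n) v) = (Kprime n).degree v := by
  rcases v with i | j | ⟨⟨⟩⟩
  · rw [vSpectrum_kprimeColoring_inl hn, Kprime_degree_inl, card_image_of_injective, card_fin]
    intro j j' h
    have h' : i + j + 1 ≡ i + j' + 1 [MOD n] := Nat.add_right_cancel h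
    exact Fin.ext (((Nat.ModEq.add_right_cancel' 1 h').add_left_cancel' i).eq_of_lt_of_lt j.2 j'.2)
  · rw [vSpectrum_kprimeColoring_inr, Kprime_degree_inr, card_image_of_injective, card_fin]
    intro i i' h
    have hi := Nat.mod_lt (i + j + 1) hn
    have hi' := Nat.mod_lt (i' + j + 1) hn
    dsimp only at h
    split_ifs at h with hl hl'
    · exact Fin.ext (by omega)
    · omega
    · omega
    · have h' : i + j + 1 ≡ i' + j + 1 [MOD n] := Nat.add_right_cancel h
      exact Fin.ext
        (((Nat.ModEq.add_right_cancel' 1 h').add_right_cancel' j).eq_of_lt_of_lt i.2 i'.2)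
  · rw [vSpectrum_kprimeColoring_w hn, Kprime_degree_w hn, card_pair (by omega)]

lemma setDef_vSpectrum_kprimeColoring_le (hn : 2 ≤ n) (v : Fin n ⊕ Fin n ⊕ Unit) :
    setDef (vSpectrum (Kprime n) (kprimeColoring n) v) ≤
      if v = .inr (.inl ⟨n - 1, by omega⟩) then 1 else 0 := by
  have hcard := card_vSpectrum_kprimeColoring (by omega) v
  rcases v with i | j | ⟨⟨⟩⟩
  · have hsub : vSpectrum (Kprime n) (kprimeColoring n) (.inl i) ⊆ Icc 1 n := by
      rw [vSpectrum_kprimeColoring_inl (by omega)]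
      intro x hx
      obtain ⟨j, -, rfl⟩ := mem_image.1 hx
      have := Nat.mod_lt (i + j + 1) (by omega : 0 < n)
      exact mem_Icc.2 ⟨by omega, by omega⟩
    have := setDef_le_of_subset_Icc hsub
    rw [hcard, Kprime_degree_inl] at this
    simpa using this
  · have hsub : vSpectrum (Kprime n) (kprimeColoring n) (.inr (.inl j)) ⊆
        Icc 1 (if j.val = n - 1 then n + 1 else n) := by
      rw [vSpectrum_kprimeColoring_inr]
      intro x hx
      obtain ⟨i, -, rfl⟩ := mem_image.1 hx
      have := Nat.mod_lt (i + j + 1) (by omega : 0 < n)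
      rw [mem_Icc]
      split_ifs <;> omega
    have := setDef_le_of_subset_Icc hsub
    rw [hcard, Kprime_degree_inr] at this
    simp only [Sum.inr.injEq, Sum.inl.injEq, Fin.ext_iff]
    split_ifs at this ⊢ <;> omega
  · have hsub : vSpectrum (Kprime n) (kprimeColoring n) (.inr (.inr ())) ⊆ Icc n (n + 1) := by
      rw [vSpectrum_kprimeColoring_w (by omega)]
      intro x hx
      simp only [mem_insert, mem_singleton] at hx
      exact mem_Icc.2 (by omega)
    have := setDef_le_of_subset_Icc hsub
    rw [hcard, Kprime_degree_w (by omega)] at this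
    simpa using this

lemma colDef_kprimeColoring_le (hn : 2 ≤ n) : colDef (Kprime n) (kprimeColoring n) ≤ 1 :=
  calc colDef (Kprime n) (kprimeColoring n)
      ≤ ∑ v : Fin n ⊕ Fin n ⊕ Unit, if v = .inr (.inl ⟨n - 1, by omega⟩) then 1 else 0 :=
        sum_le_sum fun v _ => setDef_vSpectrum_kprimeColoring_le hn v
    _ = 1 := by simp

end KprimeColoring

theorem stmt_4 (n : ℕ) (hn : 2 ≤ n) : graphDef (Kprime n) = 1 := by
  have hproper : IsProperEdgeColoring (Kprime n) (kprimeColoring n) :=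
    isProperEdgeColoring_of_card_vSpectrum (card_vSpectrum_kprimeColoring (by omega))
  obtain ⟨c, hc, hdef⟩ : graphDef (Kprime n) ∈
      {d | ∃ c, IsProperEdgeColoring (Kprime n) c ∧ colDef (Kprime n) c = d} :=
    Nat.sInf_mem ⟨_, _, hproper, rfl⟩
  have hpos := Kprime_colDef_ne_zero hn hc
  have hle : graphDef (Kprime n) ≤ colDef (Kprime n) (kprimeColoring n) :=
    Nat.sInf_le ⟨_, hproper, rfl⟩
  have := colDef_kprimeColoring_le hn
  omega
end

section
/- For all n ≥ 1 and 1 ≤ m ≤ n, the graph K_{2n+1} − mK_2 obtained by deleting m pairwise non-adjacent edges from the complete graph on 2n+1 vertices satisfies def(K_{2n+1} − mK_2) ≥ n − m. -/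
open scoped Classical

/-!
Write `s v r` for the number of colours at `v` that are `≡ r (mod Δ)`. Colour classes of a proper
edge-colouring are matchings, so `Σ_v s v r` is even; as `|V|` is odd, `Σ_v |s v r - 1| ≥ 1` for
each of the `Δ` residues `r`. Conversely, a vertex of degree `≤ Δ` has
`Σ_r |s v r - 1| ≤ 2 def(v) + Δ - deg v`, because the colours among the first `Δ` values of its
interval have distinct residues and at most `def(v)` colours lie beyond them. Summing over `v`
gives `Δ ≤ 2 def(G) + |V| Δ - 2 |E|`; for `K_{2n+1}` minus `m` edges take `Δ = 2n` and
`|E| ≥ n (2n + 1) - m`.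
-/

open Finset

lemma card_add_setDef {S : Finset ℕ} (hS : S.Nonempty) :
    #S + setDef S = S.max' hS + 1 - S.min' hS := by
  have hsub : S ⊆ Icc (S.min' hS) (S.max' hS) := fun x hx =>
    mem_Icc.2 ⟨S.min'_le x hx, S.le_max' x hx⟩
  have hcard := card_le_card hsub
  rw [Nat.card_Icc] at hcard
  have hpos : 0 < #S := card_pos.2 hS
  have hmax : S.max.getD 0 = S.max' hS := by rw [← coe_max' hS]; rfl
  have hmin : S.min.getD 0 = S.min' hS := by rw [← coe_min' hS]; rfl
  rw [setDef, hmax, hmin]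
  omega

lemma card_le_card_image_mod_add_setDef {S : Finset ℕ} {Δ : ℕ} (hS : #S ≤ Δ) :
    #S ≤ #(S.image (· % Δ)) + setDef S := by
  rcases S.eq_empty_or_nonempty with rfl | hne
  · simp
  set a := S.min' hne
  have hlow : #(S.filter (· < a + Δ)) ≤ #(S.image (· % Δ)) := by
    rw [← card_image_of_injOn ((Nat.mod_injOn_Ico a Δ).mono ?_)]
    · exact card_le_card (image_subset_image (filter_subset _ _))
    · intro x hx
      simp only [coe_filter, Set.mem_ofPred_eq] at hx
      simpa [mem_Ico] using ⟨S.min'_le x hx.1, hx.2⟩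
  have hhigh : #(S.filter (¬ · < a + Δ)) ≤ S.max' hne + 1 - (a + Δ) := by
    rw [← Nat.card_Icc]
    refine card_le_card fun x hx => ?_
    simp only [mem_filter, not_lt] at hx
    exact mem_Icc.2 ⟨hx.2, S.le_max' x hx.1⟩
  have hsplit := card_filter_add_card_filter_not (s := S) (p := (· < a + Δ))
  have := card_add_setDef hne
  omega

lemma sum_abs_card_filter_mod_sub_one_le {S : Finset ℕ} {Δ : ℕ} (hS : #S ≤ Δ) :
    ∑ r ∈ range Δ, |(#(S.filter (· % Δ = r)) : ℤ) - 1| ≤ 2 * setDef S + Δ - #S := by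
  have himage := card_le_card_image_mod_add_setDef hS
  rcases Nat.eq_zero_or_pos Δ with rfl | hΔ
  · simp [nonpos_iff_eq_zero.1 hS]
  have hmaps : (S : Set ℕ).MapsTo (· % Δ) (range Δ) := fun x _ =>
    mem_range.2 (Nat.mod_lt x hΔ)
  have hfib : ∑ r ∈ range Δ, (#(S.filter (· % Δ = r)) : ℤ) = #S := by
    exact_mod_cast (card_eq_sum_card_fiberwise hmaps).symm
  have habs : ∀ r, |(#(S.filter (· % Δ = r)) : ℤ) - 1|
      = #(S.filter (· % Δ = r)) - 1 + 2 * (if r ∉ S.image (· % Δ) then 1 else 0) := by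
    intro r
    by_cases hr : r ∈ S.image (· % Δ)
    · have : 0 < #(S.filter (· % Δ = r)) := by
        obtain ⟨x, hx, rfl⟩ := mem_image.1 hr
        exact card_pos.2 ⟨x, mem_filter.2 ⟨hx, rfl⟩⟩
      rw [if_neg (not_not.2 hr), abs_of_nonneg (by omega)]
      ring
    · have : S.filter (· % Δ = r) = ∅ := by
        ext x; simp only [mem_filter, notMem_empty, iff_false, not_and]
        exact fun hx hxr => hr (mem_image.2 ⟨x, hx, hxr⟩)
      simp [this, hr]
  have hmissing : ∑ r ∈ range Δ, (if r ∉ S.image (· % Δ) then (1 : ℤ) else 0)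
      = Δ - #(S.image (· % Δ)) := by
    rw [sum_boole, filter_notMem_eq_sdiff, card_sdiff_of_subset (image_subset_iff.2 hmaps)]
    rw [card_range, Nat.cast_sub (by simpa using card_le_card (image_subset_iff.2 hmaps))]
  rw [sum_congr rfl fun r _ => habs r, sum_add_distrib, sum_sub_distrib, ← mul_sum, hfib,
    hmissing]
  simp only [sum_const, card_range, nsmul_eq_mul, mul_one]
  omega

lemma one_le_sum_abs_sub_one {ι : Type*} (s : Finset ι) (hs : Odd #s) (x : ι → ℕ)
    (hx : Even (∑ i ∈ s, x i)) : 1 ≤ ∑ i ∈ s, |(x i : ℤ) - 1| := by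
  have hne : ∑ i ∈ s, ((x i : ℤ) - 1) ≠ 0 := by
    rw [sum_sub_distrib, sum_const, nsmul_one, sub_ne_zero]
    intro h
    have h' : ∑ i ∈ s, x i = #s := by exact_mod_cast h
    exact Nat.not_even_iff_odd.2 hs (h' ▸ hx)
  calc (1 : ℤ) ≤ |∑ i ∈ s, ((x i : ℤ) - 1)| := Int.one_le_abs hne
    _ ≤ ∑ i ∈ s, |(x i : ℤ) - 1| := abs_sum_le_sum_abs _ _

variable {V : Type*} [Fintype V] {G : SimpleGraph V} {c : Sym2 V → ℕ}

omit [Fintype V] in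
lemma IsProperEdgeColoring.injOn_adj (hc : IsProperEdgeColoring G c) (v : V) :
    Set.InjOn (fun u => c s(v, u)) {u | G.Adj v u} := by
  intro u hu w hw huw
  by_contra hne
  exact hc _ hu _ hw (fun h => hne (Sym2.congr_right.1 h))
    ⟨v, Sym2.mem_mk_left _ _, Sym2.mem_mk_left _ _⟩ huw

lemma IsProperEdgeColoring.card_vSpectrum_filter (hc : IsProperEdgeColoring G c)
    (P : ℕ → Prop) [DecidablePred P] (v : V) :
    #((vSpectrum G c v).filter P) = (G.deleteEdges {e | ¬ P (c e)}).degree v := by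
  rw [vSpectrum, filter_image, card_image_of_injOn, ← SimpleGraph.card_neighborFinset_eq_degree,
    SimpleGraph.neighborFinset_eq_filter, filter_filter]
  · congr 1
    ext u
    simp
  · exact (hc.injOn_adj v).mono fun u hu => by simp_all

lemma IsProperEdgeColoring.card_vSpectrum [DecidableRel G.Adj] (hc : IsProperEdgeColoring G c)
    (v : V) : #(vSpectrum G c v) = G.degree v := by
  convert hc.card_vSpectrum_filter (fun _ => True) v using 2 <;> simp

lemma IsProperEdgeColoring.even_sum_card_vSpectrum_filter (hc : IsProperEdgeColoring G c)
    (P : ℕ → Prop) [DecidablePred P] : Even (∑ v, #((vSpectrum G c v).filter P)) := by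
  simp_rw [hc.card_vSpectrum_filter]
  rw [SimpleGraph.sum_degrees_eq_twice_card_edges]
  exact even_two_mul _

theorem IsProperEdgeColoring.add_sum_degree_le_two_mul_colDef [DecidableRel G.Adj]
    (hc : IsProperEdgeColoring G c) (hV : Odd (Fintype.card V)) {Δ : ℕ}
    (hΔ : ∀ v, G.degree v ≤ Δ) :
    Δ + ∑ v, G.degree v ≤ 2 * colDef G c + Fintype.card V * Δ := by
  set s : V → ℕ → ℕ := fun v r => #((vSpectrum G c v).filter (· % Δ = r))
  have hresidue : ∀ r, 1 ≤ ∑ v, |(s v r : ℤ) - 1| := fun r =>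
    one_le_sum_abs_sub_one univ hV _ (hc.even_sum_card_vSpectrum_filter (· % Δ = r))
  have hvertex : ∀ v, ∑ r ∈ range Δ, |(s v r : ℤ) - 1|
      ≤ 2 * setDef (vSpectrum G c v) + Δ - G.degree v := fun v => by
    rw [← hc.card_vSpectrum v]
    exact sum_abs_card_filter_mod_sub_one_le (hc.card_vSpectrum v ▸ hΔ v)
  have hsum : (Δ : ℤ) ≤ 2 * colDef G c + Fintype.card V * Δ - ∑ v, G.degree v :=
    calc (Δ : ℤ) = ∑ r ∈ range Δ, 1 := by simp
      _ ≤ ∑ r ∈ range Δ, ∑ v, |(s v r : ℤ) - 1| := sum_le_sum fun r _ => hresidue r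
      _ = ∑ v, ∑ r ∈ range Δ, |(s v r : ℤ) - 1| := sum_comm
      _ ≤ ∑ v, (2 * setDef (vSpectrum G c v) + Δ - G.degree v : ℤ) :=
        sum_le_sum fun v _ => hvertex v
      _ = 2 * colDef G c + Fintype.card V * Δ - ∑ v, G.degree v := by
        simp [colDef, sum_sub_distrib, sum_add_distrib, mul_sum]
  omega

lemma exists_colDef_eq_graphDef : ∃ c, IsProperEdgeColoring G c ∧ colDef G c = graphDef G := by
  have hinj : IsProperEdgeColoring G fun e => Fintype.equivFin (Sym2 V) e :=
    fun _ _ _ _ hne _ heq => hne ((Fintype.equivFin _).injective (Fin.val_injective heq))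
  exact Nat.sInf_mem (s := {d | ∃ c, IsProperEdgeColoring G c ∧ colDef G c = d})
    ⟨_, _, hinj, rfl⟩

theorem add_two_mul_card_edgeFinset_le_two_mul_graphDef [DecidableRel G.Adj]
    (hV : Odd (Fintype.card V)) {Δ : ℕ} (hΔ : ∀ v, G.degree v ≤ Δ) :
    Δ + 2 * #G.edgeFinset ≤ 2 * graphDef G + Fintype.card V * Δ := by
  obtain ⟨c, hc, hdef⟩ := exists_colDef_eq_graphDef (G := G)
  rw [← hdef, ← G.sum_degrees_eq_twice_card_edges]
  exact hc.add_sum_degree_le_two_mul_colDef hV hΔ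

lemma SimpleGraph.choose_two_le_card_edgeFinset_top_deleteEdges_add [DecidableEq V]
    (M : Finset (Sym2 V)) :
    (Fintype.card V).choose 2 ≤ #((⊤ : SimpleGraph V).deleteEdges ↑M).edgeFinset + #M := by
  rw [← card_edgeFinset_top_eq_card_choose_two, edgeFinset_deleteEdges]
  have := le_card_sdiff M (⊤ : SimpleGraph V).edgeFinset
  omega

lemma Nat.choose_two_two_mul_add_one (n : ℕ) : (2 * n + 1).choose 2 = n * (2 * n + 1) := by
  rw [Nat.choose_two_right, Nat.add_sub_cancel,
    show (2 * n + 1) * (2 * n) = n * (2 * n + 1) * 2 by ring, Nat.mul_div_cancel _ two_pos]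

theorem stmt_16_general (n m : ℕ)
    (M : Finset (Sym2 (Fin (2 * n + 1)))) (hcard : M.card = m) :
    n - m ≤ graphDef ((SimpleGraph.completeGraph (Fin (2 * n + 1))).deleteEdges ↑M) := by
  set G := (SimpleGraph.completeGraph (Fin (2 * n + 1))).deleteEdges ↑M
  have hdeg : ∀ v, G.degree v ≤ 2 * n := fun v => by
    simpa [Nat.lt_succ_iff] using G.degree_lt_card_verts v
  have hbound := add_two_mul_card_edgeFinset_le_two_mul_graphDef (by simp) hdeg
  have hedges : n * (2 * n + 1) ≤ #G.edgeFinset + m := by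
    have := SimpleGraph.choose_two_le_card_edgeFinset_top_deleteEdges_add M
    rwa [Fintype.card_fin, Nat.choose_two_two_mul_add_one, hcard] at this
  rw [Fintype.card_fin, show (2 * n + 1) * (2 * n) = 2 * (n * (2 * n + 1)) by ring] at hbound
  omega

theorem stmt_16 (n m : ℕ) (hm1 : 1 ≤ m) (hmn : m ≤ n)
    (M : Finset (Sym2 (Fin (2 * n + 1)))) (hcard : M.card = m)
    (hM : ∀ e ∈ M, ¬e.IsDiag)
    (hdisj : ∀ e ∈ M, ∀ f ∈ M, e ≠ f → ∀ v, v ∈ e → v ∉ f) :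
    n - m ≤ graphDef ((SimpleGraph.completeGraph (Fin (2 * n + 1))).deleteEdges ↑M) :=
  stmt_16_general n m M hcard
end
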